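/- arXiv:1106.1280 — 2 statements merged into one kernel-verified Lean document; each statement's English description precedes it below -/
import Mathlib

section
/- (Block-diagonal entropy production in the linear regime) Let ℓ be a positive diagonal matrix on ℝ^E and let j ∈ ℝ^E be arbitrary, with a = ℓ j. Write A^α = (c^α, a) and J*^μ = (c*^μ, j). Then σ = (j, ℓ j) = Σ_{αβ} (L^{-1})_{αβ} A^α A^β + Σ_{μν} (L_*^{-1})_{μν} J*^μ J*^ν, where L^{αβ} = (c^α, ℓ c^β) and L_*^{μν} = (c*^μ, ℓ^{-1} c*^ν). -/
open Matrix BigOperators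

/-- A finite graph with oriented edges: each edge has a head and a tail vertex
(loops and multiple edges are allowed). -/
structure OrientedGraph (V E : Type) where
  head : E → V
  tail : E → V

variable {V E : Type} [Fintype V] [Fintype E] [DecidableEq V] [DecidableEq E]

/-- Signed incidence matrix: `+1` if `v` is the head of `e`, `-1` if `v` is the tail of `e`,
and `0` otherwise (in particular `0` on loops). -/
def inc (G : OrientedGraph V E) : Matrix V E ℝ := fun v e =>
  (if G.head e = v then 1 else 0) - (if G.tail e = v then 1 else 0)

/-- The underlying simple graph of an oriented graph. -/
def toSimple (G : OrientedGraph V E) : SimpleGraph V :=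
  SimpleGraph.fromRel (fun v w => ∃ e, G.head e = v ∧ G.tail e = w)

/-- The underlying simple graph of an oriented graph, restricted to edges in `T`. -/
def toSimpleOn (G : OrientedGraph V E) (T : Finset E) : SimpleGraph V :=
  SimpleGraph.fromRel (fun v w => ∃ e ∈ T, G.head e = v ∧ G.tail e = w)

/-- The oriented graph is connected. -/
def IsConnectedG (G : OrientedGraph V E) : Prop := (toSimple G).Connected

/-- `T` is a spanning tree of `G`: the subgraph on edge set `T` is connected and has
`|V| - 1` edges (equivalently, `T` is a maximal subset of edges containing no cycle). -/
def IsSpanningTree (G : OrientedGraph V E) (T : Finset E) : Prop :=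
  (toSimpleOn G T).Connected ∧ T.card = Fintype.card V - 1

/-- The cycle space `ker ∂ ⊆ ℝ^E`. -/
def cycleSpace (G : OrientedGraph V E) : Submodule ℝ (E → ℝ) :=
  LinearMap.ker (inc G).mulVecLin

/-- The cocycle space: the row space of `∂`, i.e. the range of `∂ᵀ` on `ℝ^V`. -/
def cocycleSpace (G : OrientedGraph V E) : Submodule ℝ (E → ℝ) :=
  LinearMap.range (inc G)ᵀ.mulVecLin

/-- `x` is the fundamental cycle of the chord `a ∉ T`: the signed indicator vector of the
unique cycle in `T ∪ {a}`, oriented so that its coefficient on `a` is `+1`; equivalently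
(for a spanning tree `T`) the unique vector of the cycle space supported on `T ∪ {a}`
with coefficient `+1` on `a`. -/
def IsFundCycle (G : OrientedGraph V E) (T : Finset E) (a : E) (x : E → ℝ) : Prop :=
  x ∈ cycleSpace G ∧ x a = 1 ∧ ∀ e, e ∉ T → e ≠ a → x e = 0

/-- `x` is the fundamental cocycle of the cochord `a ∈ T`: the signed indicator vector of
the cut obtained by removing `a` from the spanning tree `T`, oriented so that its
coefficient on `a` is `+1`; equivalently the unique vector of the cocycle space vanishing
on `T \ {a}` with coefficient `+1` on `a`. -/
def IsFundCocycle (G : OrientedGraph V E) (T : Finset E) (a : E) (x : E → ℝ) : Prop :=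
  x ∈ cocycleSpace G ∧ x a = 1 ∧ ∀ e ∈ T, e ≠ a → x e = 0

/-!
Let `C` and `D` be the matrices whose columns are the fundamental cycles and cocycles, and
`M = diag ℓ`. Cycles are orthogonal to cocycles and `M` is positive definite, so the columns of
`M C` and `D` are linearly independent; there are `|E|` of them, hence `M j = M C x + D y`.
Then `A = Cᵀ M j = L x`, `J* = Dᵀ j = L_* y` and
`σ = (j, M j) = (A, x) + (J*, y) = (A, L⁻¹ A) + (J*, L_*⁻¹ J*)`.
-/

namespace Matrix

theorem mulVec_dotProduct_mulVec {m n p : Type*} [Fintype m] [Fintype n] [Fintype p]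
    (A : Matrix m n ℝ) (B : Matrix m p ℝ) (x : n → ℝ) (y : p → ℝ) :
    (A *ᵥ x) ⬝ᵥ (B *ᵥ y) = x ⬝ᵥ ((Aᵀ * B) *ᵥ y) := by
  rw [← mulVec_mulVec, dotProduct_mulVec x, vecMul_transpose]

theorem sum_sum_mul_mul_eq_dotProduct_mulVec {n : Type*} [Fintype n] (Q : Matrix n n ℝ)
    (v : n → ℝ) : ∑ α, ∑ β, Q α β * v α * v β = v ⬝ᵥ (Q *ᵥ v) := by
  simp only [dotProduct, mulVec, Finset.mul_sum]
  exact Finset.sum_congr rfl fun α _ => Finset.sum_congr rfl fun β _ => by ring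

theorem injective_mulVec_transpose_of_apply_eq_ite {n ι : Type*} [Fintype ι]
    [DecidableEq ι] (c : ι → n → ℝ) (f : ι → n) (hc : ∀ α β, c α (f β) = if β = α then 1 else 0) :
    Function.Injective (of c)ᵀ.mulVec := by
  intro x y hxy
  funext β
  simpa [mulVec, dotProduct, hc] using congrFun hxy (f β)

theorem of_mul_diagonal_mul_transpose_apply {n ι : Type*} [Fintype n] [DecidableEq n]
    (c : ι → n → ℝ) (d : n → ℝ) (α β : ι) :
    (of c * diagonal d * (of c)ᵀ) α β = c α ⬝ᵥ fun e => d e * c β e := by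
  rw [mul_apply]
  simp [mul_diagonal, dotProduct, mul_assoc]

variable {n ι κ : Type*} [Fintype n] [Fintype ι] [Fintype κ] {M : Matrix n n ℝ}
  {C : Matrix n ι ℝ} {D : Matrix n κ ℝ}

theorem PosDef.transpose_mul_mul_same (hM : M.PosDef) (hC : Function.Injective C.mulVec) :
    (Cᵀ * M * C).PosDef := by
  simpa [conjTranspose_eq_transpose_of_trivial] using hM.conjTranspose_mul_mul_same hC

theorem PosDef.eq_zero_of_mul_mulVec_add_mulVec_eq_zero (hM : M.PosDef)
    (hC : Function.Injective C.mulVec) (hD : Function.Injective D.mulVec) (hCD : Cᵀ * D = 0)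
    {x : ι → ℝ} {y : κ → ℝ} (h : (M * C) *ᵥ x + D *ᵥ y = 0) : x = 0 ∧ y = 0 := by
  set p := C *ᵥ x
  have hp : M *ᵥ p + D *ᵥ y = 0 := by rwa [mulVec_mulVec]
  have hpMp : p ⬝ᵥ (M *ᵥ p) = 0 := by
    have hpDy : p ⬝ᵥ (D *ᵥ y) = 0 := by
      rw [mulVec_dotProduct_mulVec, hCD, zero_mulVec, dotProduct_zero]
    simpa [dotProduct_add, hpDy] using congrArg (dotProduct p) hp
  have hp0 : p = 0 := by
    by_contra hne
    simpa [hpMp] using hM.dotProduct_mulVec_pos hne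
  have hx : x = 0 := hC (by rw [mulVec_zero]; exact hp0)
  refine ⟨hx, hD ?_⟩
  rw [mulVec_zero, ← hp, hp0, mulVec_zero, zero_add]

theorem PosDef.exists_eq_mul_mulVec_add_mulVec (hM : M.PosDef)
    (hC : Function.Injective C.mulVec) (hD : Function.Injective D.mulVec) (hCD : Cᵀ * D = 0)
    (hcard : Fintype.card ι + Fintype.card κ = Fintype.card n) (v : n → ℝ) :
    ∃ x y, v = (M * C) *ᵥ x + D *ᵥ y := by
  set K := fromCols (M * C) D
  have hinj : Function.Injective K.mulVecLin := by
    refine (injective_iff_map_eq_zero _).mpr fun z hz => ?_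
    obtain ⟨hx, hy⟩ := hM.eq_zero_of_mul_mulVec_add_mulVec_eq_zero hC hD hCD
      (by simpa [K] using hz)
    ext (i | k)
    · exact congrFun hx i
    · exact congrFun hy k
  obtain ⟨z, hz⟩ := (LinearMap.injective_iff_surjective_of_finrank_eq_finrank
    (by simp [hcard])).mp hinj v
  exact ⟨z ∘ Sum.inl, z ∘ Sum.inr, by simpa [K] using hz.symm⟩

theorem PosDef.dotProduct_mulVec_eq_add [DecidableEq n] [DecidableEq ι] [DecidableEq κ]
    (hM : M.PosDef) (hC : Function.Injective C.mulVec) (hD : Function.Injective D.mulVec)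
    (hCD : Cᵀ * D = 0) (hcard : Fintype.card ι + Fintype.card κ = Fintype.card n)
    (j : n → ℝ) :
    j ⬝ᵥ (M *ᵥ j) =
      (Cᵀ *ᵥ (M *ᵥ j)) ⬝ᵥ ((Cᵀ * M * C)⁻¹ *ᵥ (Cᵀ *ᵥ (M *ᵥ j))) +
        (Dᵀ *ᵥ j) ⬝ᵥ ((Dᵀ * M⁻¹ * D)⁻¹ *ᵥ (Dᵀ *ᵥ j)) := by
  obtain ⟨x, y, hMj⟩ := hM.exists_eq_mul_mulVec_add_mulVec hC hD hCD hcard (M *ᵥ j)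
  have hMinv : M⁻¹ * M = 1 := nonsing_inv_mul M ((isUnit_iff_isUnit_det M).mp hM.isUnit)
  have hMt : Mᵀ = M := by simpa using hM.isHermitian.eq
  have hj : j = C *ᵥ x + M⁻¹ *ᵥ (D *ᵥ y) := by
    rw [← one_mulVec j, ← hMinv, ← mulVec_mulVec, hMj, mulVec_add, mulVec_mulVec,
      ← Matrix.mul_assoc, hMinv, Matrix.one_mul]
  have hA : Cᵀ *ᵥ (M *ᵥ j) = (Cᵀ * M * C) *ᵥ x := by
    rw [hMj, mulVec_add, mulVec_mulVec, mulVec_mulVec, hCD, zero_mulVec, add_zero,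
      Matrix.mul_assoc]
  have hJ : Dᵀ *ᵥ j = (Dᵀ * M⁻¹ * D) *ᵥ y := by
    have hDC : Dᵀ * C = 0 := by rw [← transpose_transpose C, ← transpose_mul, hCD, transpose_zero]
    rw [hj, mulVec_add, mulVec_mulVec, hDC, zero_mulVec, zero_add]
    simp only [mulVec_mulVec, Matrix.mul_assoc]
  have hσ : j ⬝ᵥ (M *ᵥ j) = (Cᵀ *ᵥ (M *ᵥ j)) ⬝ᵥ x + (Dᵀ *ᵥ j) ⬝ᵥ y := by
    rw [hMj, dotProduct_add, dotProduct_mulVec, dotProduct_mulVec j D, ← mulVec_transpose,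
      ← mulVec_transpose, ← hMj, transpose_mul, hMt, ← mulVec_mulVec]
  have hL := (isUnit_iff_isUnit_det _).mp (hM.transpose_mul_mul_same hC).isUnit
  have hL' := (isUnit_iff_isUnit_det _).mp (hM.inv.transpose_mul_mul_same hD).isUnit
  rw [hσ, hA, hJ, mulVec_mulVec, nonsing_inv_mul _ hL, one_mulVec, mulVec_mulVec,
    nonsing_inv_mul _ hL', one_mulVec]

end Matrix

theorem dotProduct_eq_zero_of_mem_cycleSpace_of_mem_cocycleSpace {V E : Type} [Fintype V]
    [Fintype E] [DecidableEq V] (G : OrientedGraph V E)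
    {x y : E → ℝ} (hx : x ∈ cycleSpace G) (hy : y ∈ cocycleSpace G) : x ⬝ᵥ y = 0 := by
  obtain ⟨u, rfl⟩ := hy
  rw [mulVecLin_apply, dotProduct_mulVec, vecMul_transpose, show inc G *ᵥ x = 0 from hx,
    zero_dotProduct]

theorem IsFundCycle.apply_of_notMem {V E : Type} [Fintype E] [DecidableEq V] [DecidableEq E]
    {G : OrientedGraph V E} {T : Finset E} {a b : E}
    {x : E → ℝ} (h : IsFundCycle G T a x) (hb : b ∉ T) : x b = if b = a then 1 else 0 := by
  split_ifs with hba
  · exact hba ▸ h.2.1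
  · exact h.2.2 b hb hba

theorem IsFundCocycle.apply_of_mem {V E : Type} [Fintype V] [DecidableEq V] [DecidableEq E]
    {G : OrientedGraph V E} {T : Finset E} {a b : E}
    {x : E → ℝ} (h : IsFundCocycle G T a x) (hb : b ∈ T) : x b = if b = a then 1 else 0 := by
  split_ifs with hba
  · exact hba ▸ h.2.1
  · exact h.2.2 b hb hba

theorem injective_mulVec_of_isFundCycle {V E : Type} [Fintype E] [DecidableEq V]
    [DecidableEq E] {G : OrientedGraph V E} {T : Finset E} {c : {e : E // e ∉ T} → E → ℝ}
    (hc : ∀ α, IsFundCycle G T α.1 (c α)) : Function.Injective (Matrix.of c)ᵀ.mulVec :=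
  injective_mulVec_transpose_of_apply_eq_ite c Subtype.val fun α β =>
    (hc α).apply_of_notMem β.2 |>.trans (by simp only [Subtype.val_inj])

theorem injective_mulVec_of_isFundCocycle {V E : Type} [Fintype V] [DecidableEq V]
    [DecidableEq E] {G : OrientedGraph V E} {T : Finset E} {cc : {e : E // e ∈ T} → E → ℝ}
    (hcc : ∀ μ, IsFundCocycle G T μ.1 (cc μ)) : Function.Injective (Matrix.of cc)ᵀ.mulVec :=
  injective_mulVec_transpose_of_apply_eq_ite cc Subtype.val fun μ ν =>
    (hcc μ).apply_of_mem ν.2 |>.trans (by simp only [Subtype.val_inj])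

theorem card_notMem_add_card_mem {E : Type} [Fintype E] [DecidableEq E] (T : Finset E) :
    Fintype.card {e // e ∉ T} + Fintype.card {e // e ∈ T} = Fintype.card E := by
  rw [add_comm, Fintype.card_subtype_compl, Nat.add_sub_cancel' (Fintype.card_subtype_le _)]

theorem stmt_17_general {V E : Type} [Fintype V] [Fintype E] [DecidableEq V] [DecidableEq E]
    (G : OrientedGraph V E) (T : Finset E)
    (c : {e : E // e ∉ T} → (E → ℝ)) (hc : ∀ α, IsFundCycle G T α.1 (c α))
    (cc : {e : E // e ∈ T} → (E → ℝ)) (hcc : ∀ μ, IsFundCocycle G T μ.1 (cc μ))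
    (ℓ : E → ℝ) (hℓ : ∀ e, 0 < ℓ e)
    (L : Matrix {e : E // e ∉ T} {e : E // e ∉ T} ℝ)
    (hL : ∀ α β, L α β = c α ⬝ᵥ fun e => ℓ e * c β e)
    (Lstar : Matrix {e : E // e ∈ T} {e : E // e ∈ T} ℝ)
    (hLstar : ∀ μ ν, Lstar μ ν = cc μ ⬝ᵥ fun e => (ℓ e)⁻¹ * cc ν e)
    (j : E → ℝ) (a : E → ℝ) (ha : a = fun e => ℓ e * j e) :
    j ⬝ᵥ (fun e => ℓ e * j e) =
      (∑ α, ∑ β, L⁻¹ α β * (c α ⬝ᵥ a) * (c β ⬝ᵥ a)) +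
      ∑ μ, ∑ ν, Lstar⁻¹ μ ν * (cc μ ⬝ᵥ j) * (cc ν ⬝ᵥ j) := by
  have hinv : (diagonal ℓ)⁻¹ = diagonal fun e => (ℓ e)⁻¹ :=
    inv_eq_left_inv (by simp [fun e => inv_mul_cancel₀ (hℓ e).ne'])
  have hLC : L = of c * diagonal ℓ * (of c)ᵀ := by
    ext α β
    rw [hL, of_mul_diagonal_mul_transpose_apply]
  have hLD : Lstar = of cc * (diagonal ℓ)⁻¹ * (of cc)ᵀ := by
    ext μ ν
    rw [hLstar, hinv, of_mul_diagonal_mul_transpose_apply]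
  have hCD : of c * (of cc)ᵀ = 0 := by
    ext α μ
    exact dotProduct_eq_zero_of_mem_cycleSpace_of_mem_cocycleSpace G (hc α).1 (hcc μ).1
  have key := (posDef_diagonal_iff.mpr hℓ).dotProduct_mulVec_eq_add
    (injective_mulVec_of_isFundCycle hc) (injective_mulVec_of_isFundCocycle hcc)
    (by rwa [transpose_transpose]) (card_notMem_add_card_mem T) j
  rw [transpose_transpose, transpose_transpose, ← hLC, ← hLD,
    show diagonal ℓ *ᵥ j = a from ha ▸ funext (mulVec_diagonal ℓ j)] at key
  rw [← ha]
  simp only [sum_sum_mul_mul_eq_dotProduct_mulVec]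
  exact key

/-- block-diagonal entropy production in the linear regime: for a positive
diagonal `ℓ`, arbitrary `j` and `a = ℓ j`,
`σ = (j, ℓ j) = Σ_{αβ} (L⁻¹)_{αβ} A^α A^β + Σ_{μν} (L_*⁻¹)_{μν} J*^μ J*^ν`. -/
theorem stmt_17 {V E : Type} [Fintype V] [Fintype E] [DecidableEq V] [DecidableEq E]
    (G : OrientedGraph V E) (hG : IsConnectedG G) (T : Finset E)
    (hT : IsSpanningTree G T)
    (c : {e : E // e ∉ T} → (E → ℝ)) (hc : ∀ α, IsFundCycle G T α.1 (c α))
    (cc : {e : E // e ∈ T} → (E → ℝ)) (hcc : ∀ μ, IsFundCocycle G T μ.1 (cc μ))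
    (ℓ : E → ℝ) (hℓ : ∀ e, 0 < ℓ e)
    (L : Matrix {e : E // e ∉ T} {e : E // e ∉ T} ℝ)
    (hL : ∀ α β, L α β = c α ⬝ᵥ fun e => ℓ e * c β e)
    (Lstar : Matrix {e : E // e ∈ T} {e : E // e ∈ T} ℝ)
    (hLstar : ∀ μ ν, Lstar μ ν = cc μ ⬝ᵥ fun e => (ℓ e)⁻¹ * cc ν e)
    (j : E → ℝ) (a : E → ℝ) (ha : a = fun e => ℓ e * j e) :
    j ⬝ᵥ (fun e => ℓ e * j e) =
      (∑ α, ∑ β, L⁻¹ α β * (c α ⬝ᵥ a) * (c β ⬝ᵥ a)) +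
      ∑ μ, ∑ ν, Lstar⁻¹ μ ν * (cc μ ⬝ᵥ j) * (cc ν ⬝ᵥ j) :=
  stmt_17_general G T c hc cc hcc ℓ hℓ L hL Lstar hLstar j a ha
end

section
/- (Dual minimum entropy production principle) Let ℓ be a positive diagonal matrix on ℝ^E and fix values J̄*^μ ∈ ℝ. Among all force vectors a ∈ ℝ^E satisfying the constraints (c*^μ, ℓ^{-1} a) = J̄*^μ for all μ, the entropy production σ(a) = (a, ℓ^{-1} a) attains its unique minimum at a* = Σ_μ λ_μ c*^μ with λ = L_*^{-1} J̄*, where L_*^{μν} = (c*^μ, ℓ^{-1} c*^ν). In particular the minimizer lies in the cocycle space rowspace(∂), i.e., it is detailed balanced (all its cycle circulations vanish). -/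
open Matrix BigOperators

variable {V E : Type} [Fintype V] [Fintype E] [DecidableEq V] [DecidableEq E]

/-!
Let `C` be the matrix whose rows are the fundamental cocycles and `M = ℓ⁻¹`, so the constraints
read `C M a = J̄` and `L_* = C M Cᵀ`. The cocycles restrict to the identity on the tree edges, so
`Cᵀ` is injective and `L_*` is positive definite, hence invertible; `a* = Cᵀ L_*⁻¹ J̄` then meets
the constraints. Any other admissible `a` differs from `a*` by some `d` with `C M d = 0`, which is
`M`-orthogonal to the range of `Cᵀ`, so `σ(a) = σ(a*) + σ(d) > σ(a*)`.
-/

namespace Matrix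

variable {E ι R : Type*}

lemma mul_mul_transpose_apply [Fintype E] [NonUnitalCommSemiring R] (C : Matrix ι E R)
    (M : Matrix E E R) (μ ν : ι) : (C * M * Cᵀ) μ ν = C μ ⬝ᵥ (M *ᵥ C ν) := by
  rw [Matrix.mul_assoc, mul_apply, dotProduct]
  refine Finset.sum_congr rfl fun e _ => ?_
  rw [mul_apply, mulVec, dotProduct]
  simp only [transpose_apply, mul_comm]

lemma vecMul_injective_of_submatrix_eq_one [Fintype ι] [DecidableEq ι] [NonAssocSemiring R]
    {C : Matrix ι E R} {s : ι → E} (hC : C.submatrix id s = 1) : Function.Injective C.vecMul := by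
  have hs (x : ι → R) : (x ᵥ* C) ∘ s = x := by
    rw [show (x ᵥ* C) ∘ s = x ᵥ* C.submatrix id s from rfl, hC, vecMul_one]
  intro x y hxy
  rw [← hs x, ← hs y]
  exact congrArg (· ∘ s) hxy

variable [Fintype E] [Fintype ι] {M : Matrix E E ℝ} {C : Matrix ι E ℝ}

lemma PosDef.mul_mul_transpose (hM : M.PosDef) (hC : Function.Injective C.vecMul) :
    (C * M * Cᵀ).PosDef := by
  simpa [conjTranspose_eq_transpose_of_trivial] using hM.mul_mul_conjTranspose_same hC

lemma mulVec_mulVec_transpose_mulVec_inv [DecidableEq ι] (hL : IsUnit (C * M * Cᵀ))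
    (J : ι → ℝ) : C *ᵥ (M *ᵥ (Cᵀ *ᵥ ((C * M * Cᵀ)⁻¹ *ᵥ J))) = J := by
  rw [mulVec_mulVec, mulVec_mulVec, mulVec_mulVec,
    mul_nonsing_inv _ ((isUnit_iff_isUnit_det _).mp hL), one_mulVec]

lemma PosDef.dotProduct_mulVec_lt_add (hM : M.PosDef) {x d : E → ℝ}
    (hxd : x ⬝ᵥ (M *ᵥ d) = 0) (hd : d ≠ 0) :
    x ⬝ᵥ (M *ᵥ x) < (x + d) ⬝ᵥ (M *ᵥ (x + d)) := by
  have hdx : d ⬝ᵥ (M *ᵥ x) = 0 := by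
    rw [dotProduct_mulVec, ← mulVec_transpose, ← conjTranspose_eq_transpose_of_trivial,
      hM.isHermitian.eq, dotProduct_comm, hxd]
  have hdd : 0 < d ⬝ᵥ (M *ᵥ d) := by simpa using hM.dotProduct_mulVec_pos hd
  simp only [mulVec_add, add_dotProduct, dotProduct_add, hxd, hdx]
  linarith

lemma PosDef.dotProduct_mulVec_lt_of_mulVec_eq (hM : M.PosDef) (w : ι → ℝ) {a : E → ℝ}
    (ha : C *ᵥ (M *ᵥ a) = C *ᵥ (M *ᵥ (Cᵀ *ᵥ w))) (hne : a ≠ Cᵀ *ᵥ w) :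
    (Cᵀ *ᵥ w) ⬝ᵥ (M *ᵥ (Cᵀ *ᵥ w)) < a ⬝ᵥ (M *ᵥ a) := by
  have hd : C *ᵥ (M *ᵥ (a - Cᵀ *ᵥ w)) = 0 := by rw [mulVec_sub, mulVec_sub, ha, sub_self]
  have hxd : (Cᵀ *ᵥ w) ⬝ᵥ (M *ᵥ (a - Cᵀ *ᵥ w)) = 0 := by
    have := congrArg (w ⬝ᵥ ·) hd
    rwa [dotProduct_mulVec w C, ← mulVec_transpose, dotProduct_zero] at this
  simpa using hM.dotProduct_mulVec_lt_add hxd (sub_ne_zero.mpr hne)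

end Matrix

open Matrix in
lemma submatrix_val_eq_one_of_isFundCocycle {V E : Type} [Fintype V] [DecidableEq V]
    [DecidableEq E] {G : OrientedGraph V E} {T : Finset E}
    {cc : {e : E // e ∈ T} → E → ℝ} (hcc : ∀ μ, IsFundCocycle G T μ.1 (cc μ)) :
    (of cc).submatrix id (Subtype.val : {e // e ∈ T} → E) = 1 := by
  ext μ ν
  by_cases h : μ = ν
  · subst h
    simp [(hcc μ).2.1]
  · simpa [one_apply_ne h] using (hcc μ).2.2 ν.1 ν.2 fun he => h (Subtype.ext he).symm

theorem stmt_19_general {V E : Type} [Fintype V] [Fintype E] [DecidableEq V] [DecidableEq E]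
    (G : OrientedGraph V E) (T : Finset E)
    (cc : {e : E // e ∈ T} → (E → ℝ)) (hcc : ∀ μ, IsFundCocycle G T μ.1 (cc μ))
    (ℓ : E → ℝ) (hℓ : ∀ e, 0 < ℓ e)
    (Lstar : Matrix {e : E // e ∈ T} {e : E // e ∈ T} ℝ)
    (hLstar : ∀ μ ν, Lstar μ ν = cc μ ⬝ᵥ fun e => (ℓ e)⁻¹ * cc ν e)
    (Jbar : {e : E // e ∈ T} → ℝ)
    (astar : E → ℝ) (hastar : astar = ∑ μ, (Lstar⁻¹ *ᵥ Jbar) μ • cc μ) :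
    (∀ μ, cc μ ⬝ᵥ (fun e => (ℓ e)⁻¹ * astar e) = Jbar μ) ∧
    (∀ a : E → ℝ, (∀ μ, cc μ ⬝ᵥ (fun e => (ℓ e)⁻¹ * a e) = Jbar μ) → a ≠ astar →
      astar ⬝ᵥ (fun e => (ℓ e)⁻¹ * astar e) < a ⬝ᵥ (fun e => (ℓ e)⁻¹ * a e)) ∧
    astar ∈ cocycleSpace G := by
  set C : Matrix {e : E // e ∈ T} E ℝ := of cc
  set M : Matrix E E ℝ := diagonal fun e => (ℓ e)⁻¹
  have hweight (x : E → ℝ) : (fun e => (ℓ e)⁻¹ * x e) = M *ᵥ x :=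
    funext fun e => (mulVec_diagonal (fun e => (ℓ e)⁻¹) x e).symm
  have hM : M.PosDef := posDef_diagonal_iff.mpr fun e => inv_pos.mpr (hℓ e)
  have hL : Lstar = C * M * Cᵀ := by
    ext μ ν
    rw [hLstar, hweight, mul_mul_transpose_apply]
    rfl
  have hLunit : IsUnit (C * M * Cᵀ) :=
    (hM.mul_mul_transpose (vecMul_injective_of_submatrix_eq_one
      (submatrix_val_eq_one_of_isFundCocycle hcc))).isUnit
  have hastar' : astar = Cᵀ *ᵥ (Lstar⁻¹ *ᵥ Jbar) := by
    rw [hastar, mulVec_transpose, vecMul_eq_sum]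
    rfl
  have hsat : C *ᵥ (M *ᵥ astar) = Jbar := by
    rw [hastar', hL]
    exact mulVec_mulVec_transpose_mulVec_inv hLunit Jbar
  simp only [hweight]
  refine ⟨congrFun hsat, fun a ha hne => ?_, ?_⟩
  · have ha' : C *ᵥ (M *ᵥ a) = C *ᵥ (M *ᵥ astar) := hsat ▸ funext ha
    rw [hastar'] at ha' hne ⊢
    exact hM.dotProduct_mulVec_lt_of_mulVec_eq _ ha' hne
  · rw [hastar]
    exact Submodule.sum_mem _ fun μ _ => Submodule.smul_mem _ _ (hcc μ).1

/-- dual minimum entropy production principle: among all force vectors `a`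
with prescribed macroscopic external currents `(c*^μ, ℓ⁻¹ a) = J̄*^μ`, the entropy
production `σ(a) = (a, ℓ⁻¹ a)` attains its unique minimum at
`a* = Σ_μ (L_*⁻¹ J̄*)_μ c*^μ`; in particular the minimizer lies in the cocycle space
(row space of `∂`), i.e. it is detailed balanced. -/
theorem stmt_19 {V E : Type} [Fintype V] [Fintype E] [DecidableEq V] [DecidableEq E]
    (G : OrientedGraph V E) (hG : IsConnectedG G) (T : Finset E)
    (hT : IsSpanningTree G T)
    (cc : {e : E // e ∈ T} → (E → ℝ)) (hcc : ∀ μ, IsFundCocycle G T μ.1 (cc μ))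
    (ℓ : E → ℝ) (hℓ : ∀ e, 0 < ℓ e)
    (Lstar : Matrix {e : E // e ∈ T} {e : E // e ∈ T} ℝ)
    (hLstar : ∀ μ ν, Lstar μ ν = cc μ ⬝ᵥ fun e => (ℓ e)⁻¹ * cc ν e)
    (Jbar : {e : E // e ∈ T} → ℝ)
    (astar : E → ℝ) (hastar : astar = ∑ μ, (Lstar⁻¹ *ᵥ Jbar) μ • cc μ) :
    (∀ μ, cc μ ⬝ᵥ (fun e => (ℓ e)⁻¹ * astar e) = Jbar μ) ∧
    (∀ a : E → ℝ, (∀ μ, cc μ ⬝ᵥ (fun e => (ℓ e)⁻¹ * a e) = Jbar μ) → a ≠ astar →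
      astar ⬝ᵥ (fun e => (ℓ e)⁻¹ * astar e) < a ⬝ᵥ (fun e => (ℓ e)⁻¹ * a e)) ∧
    astar ∈ cocycleSpace G :=
  stmt_19_general G T cc hcc ℓ hℓ Lstar hLstar Jbar astar hastar
end
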